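/- For graphs (d_card = 2), the greedy peeling bound specializes to Charikar's guarantee: since d_pair(d_card−2)+2 = 2, greedy peeling by minimum degree returns a subgraph whose average-degree density is at least half the optimum. -/
import Mathlib


open Finset

variable {α : Type*} [DecidableEq α]

-- Neighbors of `v` within the strongly induced subhypergraph `H[S]`.
open Classical in
noncomputable def nbr (E : Finset (Finset α)) (S : Finset α) (v : α) : Finset α :=
  S.filter (fun u => u ≠ v ∧ ∃ e ∈ E, e ⊆ S ∧ v ∈ e ∧ u ∈ e)

/-- `S` is `k`-cohesive: every node of `S` has at least `k` neighbors in `H[S]`. -/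
def cohesive (E : Finset (Finset α)) (k : ℕ) (S : Finset α) : Prop :=
  ∀ v ∈ S, k ≤ (nbr E S v).card

/-- Volume-density of a node set `S`. -/
noncomputable def density (E : Finset (Finset α)) (S : Finset α) : ℚ :=
  (∑ u ∈ S, ((nbr E S u).card : ℚ)) / S.card

open Classical

lemma nbr_mono (E : Finset (Finset α)) {S T : Finset α} (h : S ⊆ T) (v : α) :
    nbr E S v ⊆ nbr E T v := by
  intro u hu
  simp only [nbr, mem_filter] at hu ⊢
  obtain ⟨hS, hne, e, heE, heS, hv, hue⟩ := hu
  exact ⟨h hS, hne, e, heE, heS.trans h, hv, hue⟩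

lemma nbr_card_eq (E : Finset (Finset α))
    (hcard : ∀ e ∈ E, e.card = 2)
    (hpair : ∀ u w : α, u ≠ w → (E.filter (fun e => u ∈ e ∧ w ∈ e)).card ≤ 1)
    (S : Finset α) (v : α) :
    (nbr E S v).card = (E.filter (fun e => e ⊆ S ∧ v ∈ e)).card := by
  have hset : nbr E S v = (E.filter (fun e => e ⊆ S ∧ v ∈ e)).biUnion (fun e => e.erase v) := by
    ext u
    simp only [nbr, mem_filter, mem_biUnion, mem_erase]
    constructor
    · rintro ⟨hS, hne, e, heE, heS, hv, hue⟩
      exact ⟨e, ⟨heE, heS, hv⟩, hne, hue⟩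
    · rintro ⟨e, ⟨heE, heS, hv⟩, hne, hue⟩
      exact ⟨heS hue, hne, e, heE, heS, hv, hue⟩
  have hdisj : ∀ e1 ∈ (E.filter (fun e => e ⊆ S ∧ v ∈ e)),
      ∀ e2 ∈ (E.filter (fun e => e ⊆ S ∧ v ∈ e)), e1 ≠ e2 →
      Disjoint (e1.erase v) (e2.erase v) := by
    intro e1 h1 e2 h2 hne
    simp only [mem_filter] at h1 h2
    rw [Finset.disjoint_left]
    intro u hu1 hu2
    rw [mem_erase] at hu1 hu2
    have h1' : e1 ∈ E.filter (fun e => u ∈ e ∧ v ∈ e) :=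
      mem_filter.2 ⟨h1.1, hu1.2, h1.2.2⟩
    have h2' : e2 ∈ E.filter (fun e => u ∈ e ∧ v ∈ e) :=
      mem_filter.2 ⟨h2.1, hu2.2, h2.2.2⟩
    have := hpair u v hu1.1
    have : e1 = e2 := by
      by_contra hne'
      have h2c : 2 ≤ (E.filter (fun e => u ∈ e ∧ v ∈ e)).card :=
        Finset.one_lt_card.2 ⟨e1, h1', e2, h2', hne'⟩
      omega
    exact hne this
  rw [hset, Finset.card_biUnion hdisj]
  rw [Finset.sum_congr rfl (fun e he => ?_), Finset.sum_const, smul_eq_mul, mul_one]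
  · simp only [mem_filter] at he
    rw [Finset.card_erase_of_mem he.2.2, hcard e he.1]
    omega

lemma handshake (E : Finset (Finset α))
    (hcard : ∀ e ∈ E, e.card = 2)
    (hpair : ∀ u w : α, u ≠ w → (E.filter (fun e => u ∈ e ∧ w ∈ e)).card ≤ 1)
    (S : Finset α) :
    ∑ v ∈ S, (nbr E S v).card = 2 * (E.filter (fun e => e ⊆ S)).card := by
  calc ∑ v ∈ S, (nbr E S v).card
      = ∑ v ∈ S, (E.filter (fun e => e ⊆ S ∧ v ∈ e)).card := by
        exact Finset.sum_congr rfl (fun v _ => nbr_card_eq E hcard hpair S v)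
    _ = ∑ v ∈ S, ∑ e ∈ E, (if e ⊆ S ∧ v ∈ e then 1 else 0) := by
        exact Finset.sum_congr rfl (fun v _ => by rw [Finset.card_filter])
    _ = ∑ e ∈ E, ∑ v ∈ S, (if e ⊆ S ∧ v ∈ e then 1 else 0) := Finset.sum_comm
    _ = ∑ e ∈ E, (if e ⊆ S then 2 else 0) := by
        refine Finset.sum_congr rfl (fun e he => ?_)
        by_cases h : e ⊆ S
        · simp only [h, true_and, if_true]
          have : ∑ v ∈ S, (if v ∈ e then 1 else 0) = (S.filter (fun v => v ∈ e)).card := by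
            rw [Finset.card_filter]
          rw [this]
          have : S.filter (fun v => v ∈ e) = e := by
            ext v; simp only [mem_filter]
            exact ⟨fun h' => h'.2, fun h' => ⟨h h', h'⟩⟩
          rw [this, hcard e he]
        · simp [h]
    _ = 2 * (E.filter (fun e => e ⊆ S)).card := by
        rw [Finset.card_filter, Finset.mul_sum]
        exact Finset.sum_congr rfl (fun e _ => by by_cases h : e ⊆ S <;> simp [h])

lemma density_nonneg (E : Finset (Finset α)) (S : Finset α) : 0 ≤ density E S := by
  unfold density
  apply div_nonneg
  · exact Finset.sum_nonneg (fun u _ => by positivity)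
  · positivity

lemma density_eq (E : Finset (Finset α))
    (hcard : ∀ e ∈ E, e.card = 2)
    (hpair : ∀ u w : α, u ≠ w → (E.filter (fun e => u ∈ e ∧ w ∈ e)).card ≤ 1)
    (S : Finset α) :
    density E S = 2 * ((E.filter (fun e => e ⊆ S)).card : ℚ) / S.card := by
  unfold density
  congr 1
  have h := handshake E hcard hpair S
  have : ∑ u ∈ S, ((nbr E S u).card : ℚ) = ((∑ u ∈ S, (nbr E S u).card : ℕ) : ℚ) := by
    push_cast; ring
  rw [this, h]; push_cast; ring

lemma deg_le_density (E : Finset (Finset α)) (S : Finset α) (v : α) (hv : v ∈ S)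
    (hmin : ∀ u ∈ S, (nbr E S v).card ≤ (nbr E S u).card) :
    ((nbr E S v).card : ℚ) ≤ density E S := by
  have hpos : (0 : ℚ) < S.card := by
    exact_mod_cast Finset.card_pos.2 ⟨v, hv⟩
  rw [density, le_div_iff₀ hpos]
  calc ((nbr E S v).card : ℚ) * S.card = ∑ _u ∈ S, ((nbr E S v).card : ℚ) := by
        rw [Finset.sum_const, nsmul_eq_mul]; ring
    _ ≤ ∑ u ∈ S, ((nbr E S u).card : ℚ) :=
        Finset.sum_le_sum (fun u hu => by exact_mod_cast hmin u hu)

lemma opt_min_deg (E : Finset (Finset α))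
    (hcard : ∀ e ∈ E, e.card = 2)
    (hpair : ∀ u w : α, u ≠ w → (E.filter (fun e => u ∈ e ∧ w ∈ e)).card ≤ 1)
    (OPT : Finset α) (hmax : ∀ T : Finset α, density E T ≤ density E OPT)
    (hpos : 0 < density E OPT) (v : α) (hv : v ∈ OPT) :
    density E OPT ≤ 2 * ((nbr E OPT v).card : ℚ) := by
  set n := OPT.card with hn
  set m := (E.filter (fun e => e ⊆ OPT)).card with hm
  set d := (E.filter (fun e => e ⊆ OPT ∧ v ∈ e)).card with hd
  have hdeg : (nbr E OPT v).card = d := nbr_card_eq E hcard hpair OPT v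
  have hnpos : 0 < n := Finset.card_pos.2 ⟨v, hv⟩
  -- m = d + (edges avoiding v)
  have hsplit : d + (E.filter (fun e => e ⊆ OPT ∧ v ∉ e)).card = m := by
    have h1 : E.filter (fun e => e ⊆ OPT ∧ v ∈ e)
        = (E.filter (fun e => e ⊆ OPT)).filter (fun e => v ∈ e) := by
      rw [Finset.filter_filter]
    have h2 : E.filter (fun e => e ⊆ OPT ∧ v ∉ e)
        = (E.filter (fun e => e ⊆ OPT)).filter (fun e => v ∉ e) := by
      rw [Finset.filter_filter]
    rw [hd, hm, h1, h2]
    exact Finset.card_filter_add_card_filter_not _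
  have hdm : d ≤ m := by omega
  have herase : (E.filter (fun e => e ⊆ OPT.erase v)).card = m - d := by
    have : E.filter (fun e => e ⊆ OPT.erase v) = E.filter (fun e => e ⊆ OPT ∧ v ∉ e) := by
      apply Finset.filter_congr
      intro e _
      simp [Finset.subset_erase]
    rw [this]; omega
  rcases Nat.lt_or_ge n 2 with hn1 | hn2
  · -- n = 1 : no edges, density 0, contradiction
    exfalso
    have hm0 : m = 0 := by
      rw [hm, Finset.card_eq_zero, Finset.filter_eq_empty_iff]
      intro e he hsub
      have h2 := hcard e he
      have := Finset.card_le_card hsub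
      omega
    have : density E OPT = 0 := by
      rw [density_eq E hcard hpair, ← hm, hm0]
      simp
    linarith
  · have hle := hmax (OPT.erase v)
    rw [density_eq E hcard hpair, density_eq E hcard hpair] at hle
    rw [herase, Finset.card_erase_of_mem hv, ← hm, ← hn] at hle
    have hc1 : ((m - d : ℕ) : ℚ) = (m : ℚ) - d := by
      push_cast [Nat.cast_sub hdm]; ring
    have hc2 : ((n - 1 : ℕ) : ℚ) = (n : ℚ) - 1 := by
      have : 1 ≤ n := by omega
      push_cast [Nat.cast_sub this]; ring
    rw [hc1, hc2] at hle
    have hNpos : (0 : ℚ) < n := by exact_mod_cast hnpos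
    have hN1pos : (0 : ℚ) < (n : ℚ) - 1 := by
      have : (2 : ℚ) ≤ n := by exact_mod_cast hn2
      linarith
    rw [div_le_div_iff₀ hN1pos hNpos] at hle
    rw [density_eq E hcard hpair, ← hm, ← hn, hdeg, div_le_iff₀ hNpos]
    nlinarith [hle]

variable [Fintype α]

/-- For graphs (all hyperedges of size 2, each pair in at most one edge),
greedy peeling achieves Charikar's 2-approximation guarantee. -/
theorem greedy_graph_two_approx (E : Finset (Finset α))
    (hcard : ∀ e ∈ E, e.card = 2)
    (hpair : ∀ u w : α, u ≠ w → (E.filter (fun e => u ∈ e ∧ w ∈ e)).card ≤ 1)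
    (seq : ℕ → Finset α) (h0 : seq 0 = Finset.univ)
    (hstep : ∀ i : ℕ, (seq i).Nonempty →
      ∃ v ∈ seq i, (∀ u ∈ seq i, (nbr E (seq i) v).card ≤ (nbr E (seq i) u).card) ∧
        seq (i + 1) = (seq i).erase v)
    (Sstar : Finset α) :
    ∃ i : ℕ, density E Sstar ≤ 2 * density E (seq i) := by
  by_cases hpos : 0 < density E Sstar
  swap
  · refine ⟨0, ?_⟩
    push_neg at hpos
    have := density_nonneg E (seq 0)
    linarith
  -- choose an optimal set
  obtain ⟨OPT, -, hmaxu⟩ := Finset.exists_max_image (Finset.univ : Finset (Finset α))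
    (density E) ⟨Sstar, Finset.mem_univ _⟩
  have hmax : ∀ T : Finset α, density E T ≤ density E OPT := fun T => hmaxu T (Finset.mem_univ T)
  have hOpos : 0 < density E OPT := lt_of_lt_of_le hpos (hmax Sstar)
  have hOne : OPT.Nonempty := by
    rcases Finset.eq_empty_or_nonempty OPT with h | h
    · exfalso; rw [h] at hOpos; simp [density] at hOpos
    · exact h
  -- there is a step where OPT loses a vertex
  have hex : ∃ j, ¬ OPT ⊆ seq j := by
    by_contra h
    push_neg at h
    have hdec : ∀ j, (seq (j+1)).card < (seq j).card := by
      intro j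
      obtain ⟨v, hv, -, heq⟩ := hstep j (hOne.mono (h j))
      rw [heq, Finset.card_erase_of_mem hv]
      have : 0 < (seq j).card := Finset.card_pos.2 ⟨v, hv⟩
      omega
    have hbound : ∀ j, (seq j).card + j ≤ (seq 0).card := by
      intro j
      induction j with
      | zero => omega
      | succ k ih => have := hdec k; omega
    have := hbound ((seq 0).card + 1)
    omega
  classical
  set j0 := Nat.find hex with hj0
  have hj0spec : ¬ OPT ⊆ seq j0 := Nat.find_spec hex
  have hj0ne : j0 ≠ 0 := by
    intro h
    rw [h, h0] at hj0spec
    exact hj0spec (Finset.subset_univ _)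
  set i := j0 - 1 with hi
  have hisucc : i + 1 = j0 := by omega
  have hsub : OPT ⊆ seq i := by
    by_contra h
    exact absurd (Nat.find_min' hex h) (by omega)
  have hnot : ¬ OPT ⊆ seq (i + 1) := by rw [hisucc]; exact hj0spec
  have hne : (seq i).Nonempty := hOne.mono hsub
  obtain ⟨v, hvmem, hvmin, heq⟩ := hstep i hne
  have hvO : v ∈ OPT := by
    by_contra hvO
    exact hnot (by rw [heq]; exact Finset.subset_erase.2 ⟨hsub, hvO⟩)
  refine ⟨i, ?_⟩
  calc density E Sstar ≤ density E OPT := hmax Sstar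
    _ ≤ 2 * ((nbr E OPT v).card : ℚ) := opt_min_deg E hcard hpair OPT hmax hOpos v hvO
    _ ≤ 2 * ((nbr E (seq i) v).card : ℚ) := by
        have := Finset.card_le_card (nbr_mono E hsub v)
        have : ((nbr E OPT v).card : ℚ) ≤ ((nbr E (seq i) v).card : ℚ) := by exact_mod_cast this
        linarith
    _ ≤ 2 * density E (seq i) := by
        have := deg_le_density E (seq i) v hvmem hvmin
        linarith
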